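/- If r_1,...,r_m are drawn i.i.d. from any distribution over F_2^n, then the probability that an independently drawn vector r from the same distribution is not in the linear span of r_1,...,r_m is at most n/m. -/

import Mathlib

/-!
Call `k` an escape index of `f : ι → V` when `f k` is not in the span of the earlier vectors.
The escaping vectors are linearly independent, so at most `dim V` indices escape. For an i.i.d.
sequence, swapping coordinates `k ≤ l` shows that `l` escapes with probability at most that of
`k`; summing over all `m + 1` indices gives `(m + 1) · P(last index escapes) ≤ n`.
-/

open MeasureTheory

noncomputable instance : MeasurableSpace (ZMod 2) := ⊤

open Finset Module

theorem measure_pi_preimage_comp_perm {ι α : Type*} [Fintype ι] [MeasurableSpace α]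
    (μ : Measure α) [SigmaFinite μ] (σ : Equiv.Perm ι) (s : Set (ι → α)) :
    Measure.pi (fun _ => μ) ((fun f => f ∘ σ) ⁻¹' s) = Measure.pi (fun _ => μ) s := by
  convert (measurePreserving_piCongrLeft (fun _ : ι => μ) σ.symm).measure_preimage_equiv s
  ext f
  simp [MeasurableEquiv.coe_piCongrLeft, Equiv.piCongrLeft_apply_eq_cast]

open Classical in
theorem sum_measure_le_of_card_le {Ω ι : Type*} [MeasurableSpace Ω] [Fintype ι] (μ : Measure Ω)
    {B : ι → Set Ω} (hB : ∀ i, MeasurableSet (B i)) {c : ℕ} (h : ∀ ω, #{i | ω ∈ B i} ≤ c) :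
    ∑ i, μ (B i) ≤ c * μ Set.univ := by
  calc ∑ i, μ (B i) = ∫⁻ ω, ∑ i, (B i).indicator 1 ω ∂μ := by
        rw [lintegral_finsetSum _ fun i _ => measurable_one.indicator (hB i)]
        simp [lintegral_indicator_one (hB _)]
    _ = ∫⁻ ω, (#{i | ω ∈ B i} : ENNReal) ∂μ := by
        congr with ω
        simp [Set.indicator_apply]
    _ ≤ ∫⁻ _, (c : ENNReal) ∂μ := lintegral_mono fun ω => Nat.cast_le.mpr (h ω)
    _ = c * μ Set.univ := lintegral_const _

theorem Fin.range_comp_castSucc {α : Type*} {m : ℕ} (f : Fin (m + 1) → α) :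
    Set.range (fun i : Fin m => f i.castSucc) = f '' Set.Iio (Fin.last m) := by
  rw [← Function.comp_def f, Set.range_comp, Fin.range_castSucc]
  rfl

section

variable {K V ι : Type*} [DivisionRing K] [AddCommGroup V] [Module K V] [LinearOrder ι]

variable (K) in
def escapesSpan (k : ι) : Set (ι → V) := {f | f k ∉ Submodule.span K (f '' Set.Iio k)}

theorem linearIndepOn_escapesSpan (f : ι → V) :
    LinearIndepOn K f {k | f ∈ escapesSpan K k} := by
  refine linearIndepOn_of_finite _ fun t ht htfin => ?_
  lift t to Finset ι using htfin
  induction t using Finset.induction_on_max with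
  | empty => simp
  | insert a s hlt ih =>
    rw [coe_insert] at ht ⊢
    refine (ih ((Set.subset_insert a _).trans ht)).insert fun hmem => ht (Set.mem_insert a _) ?_
    exact Submodule.span_mono (Set.image_mono hlt) hmem

open Classical in
theorem card_escapesSpan_le [Fintype ι] [FiniteDimensional K V] (f : ι → V) :
    #{k | f ∈ escapesSpan K k} ≤ finrank K V := by
  simpa using (linearIndepOn_escapesSpan (K := K) f).fintype_card_le_finrank

theorem measure_pi_escapesSpan_le_of_le [Fintype ι] [MeasurableSpace V] (μ : Measure V)
    [SigmaFinite μ] {k l : ι} (hkl : k ≤ l) :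
    Measure.pi (fun _ => μ) (escapesSpan K l) ≤ Measure.pi (fun _ => μ) (escapesSpan K k) := by
  classical
  have hsub : escapesSpan K l ⊆ (fun f : ι → V => f ∘ Equiv.swap k l) ⁻¹' escapesSpan K k := by
    intro f hf hmem
    have hfix : (f ∘ Equiv.swap k l) '' Set.Iio k = f '' Set.Iio k :=
      Set.image_congr fun j hj =>
        congrArg f (Equiv.swap_apply_of_ne_of_ne hj.ne (hj.trans_le hkl).ne)
    change (f ∘ Equiv.swap k l) k ∈ Submodule.span K ((f ∘ Equiv.swap k l) '' Set.Iio k) at hmem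
    rw [hfix, Function.comp_apply, Equiv.swap_apply_left] at hmem
    exact hf (Submodule.span_mono (Set.image_mono (Set.Iio_subset_Iio hkl)) hmem)
  calc _ ≤ _ := measure_mono hsub
    _ = _ := measure_pi_preimage_comp_perm μ _ _

theorem card_mul_measure_pi_escapesSpan_le [Fintype ι] [FiniteDimensional K V]
    [MeasurableSpace V] [DiscreteMeasurableSpace (ι → V)] (μ : Measure V) [IsProbabilityMeasure μ]
    {l : ι} (hl : IsTop l) :
    Fintype.card ι * Measure.pi (fun _ => μ) (escapesSpan K l) ≤ finrank K V := by
  set P := Measure.pi fun _ : ι => μ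
  calc Fintype.card ι * P (escapesSpan K l) = ∑ _k : ι, P (escapesSpan K l) := by
        rw [sum_const, card_univ, nsmul_eq_mul]
    _ ≤ ∑ k, P (escapesSpan K k) :=
        sum_le_sum fun k _ => measure_pi_escapesSpan_le_of_le μ (hl k)
    _ ≤ finrank K V * P Set.univ :=
        sum_measure_le_of_card_le P (fun _ => .of_discrete) (card_escapesSpan_le (K := K))
    _ = finrank K V := by rw [measure_univ, mul_one]

end

theorem span_miss_prob_le_general (n m : ℕ)
    (D : Measure (Fin n → ZMod 2)) [IsProbabilityMeasure D] :
    (Measure.pi fun _ : Fin (m + 1) => D)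
      {f | f (Fin.last m) ∉
        Submodule.span (ZMod 2) (Set.range fun i : Fin m => f i.castSucc)} ≤
    (n : ENNReal) / (m : ENNReal) := by
  have hlast : {f : Fin (m + 1) → Fin n → ZMod 2 | f (Fin.last m) ∉
      Submodule.span (ZMod 2) (Set.range fun i : Fin m => f i.castSucc)} =
      escapesSpan (ZMod 2) (Fin.last m) := by
    ext f
    simp only [escapesSpan, Fin.range_comp_castSucc]
  have key := card_mul_measure_pi_escapesSpan_le (K := ZMod 2) D (l := Fin.last m) Fin.le_last
  rw [Fintype.card_fin, Module.finrank_fin_fun] at key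
  rw [hlast]
  calc _ ≤ (n : ENNReal) / (m + 1 : ℕ) :=
        (ENNReal.le_div_iff_mul_le (by simp) (by simp)).mpr (by rwa [mul_comm])
    _ ≤ n / m := ENNReal.div_le_div_left (by simp) _

/-- If `r_1, …, r_m` are drawn i.i.d. from any distribution over `F_2^n`, the
probability that an independently drawn vector from the same distribution does
not lie in their linear span is at most `n / m`. -/
theorem span_miss_prob_le (n m : ℕ) (hm : 0 < m)
    (D : Measure (Fin n → ZMod 2)) [IsProbabilityMeasure D] :
    (Measure.pi fun _ : Fin (m + 1) => D)
      {f | f (Fin.last m) ∉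
        Submodule.span (ZMod 2) (Set.range fun i : Fin m => f i.castSucc)} ≤
    (n : ENNReal) / (m : ENNReal) :=
  span_miss_prob_le_general n m D
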